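/- Let h, g : ℤ → ℝ be finitely supported filters satisfying ∑_{l∈ℤ} h_l h_{l+2k} = (1/2)·δ_{k,0} and ∑_{l∈ℤ} g_l g_{l+2k} = (1/2)·δ_{k,0} for every integer k, with h and g vanishing outside {0,…,L−1}, and let L_m = (2^m − 1)(L − 1) + 1. Let T ≥ L_m be an integer and let y_0, …, y_{T−1} be square-integrable real random variables (possibly heteroskedastic) with E y_t = 0 for all t and E(y_s y_t) = 0 for all s ≠ t. Define circularly, for t ∈ ℤ/Tℤ, W_{m,n,t} = ∑_{l∈ℤ} v_{m,n,l} y_{t−(l mod T)} and z_{m,n,t} = ∑_{i≥0} ∑_{j>i} v_{m,n,i} v_{m,n,j} y_{t−(i mod T)} y_{t−(j mod T)}. Then for every 0 ≤ n ≤ 2^m − 1 and every t, E z_{m,n,t} = 0, and consequently E[ ∑_{t∈ℤ/Tℤ} W_{m,n,t}² ] = (1/2^m) · E[ ∑_{t∈ℤ/Tℤ} y_t² ]. -/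

import Mathlib

open MeasureTheory ProbabilityTheory Filter

/-- Filter selector `u_n`: equals `g` if `n mod 4 ∈ {0,3}` and `h` if `n mod 4 ∈ {1,2}`. -/
noncomputable def uF (g h : ℤ → ℝ) (n : ℕ) : ℤ → ℝ :=
  fun l => if n % 4 = 0 ∨ n % 4 = 3 then g l else h l

/-- MODWPT wavelet packet filters `v_{m,n}`, defined recursively by `v_{1,0} = g`,
`v_{1,1} = h`, and `v_{m,n,l} = ∑_k u_{n,k} v_{m-1, ⌊n/2⌋, l - 2^(m-1) k}`. -/
noncomputable def wp (g h : ℤ → ℝ) : ℕ → ℕ → ℤ → ℝ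
  | 0, _, _ => 0
  | 1, n, l => if n = 0 then g l else h l
  | (m + 2), n, l => ∑ᶠ k : ℤ, uF g h n k * wp g h (m + 1) (n / 2) (l - 2 ^ (m + 1) * k)

/-!
The filter `v = v_{m,n}` is supported in `[0, L_m - 1] ⊆ [0, T - 1]`, so the shifts `t - l` over
its support are distinct in `ℤ/Tℤ`. By uncorrelatedness the cross terms `z_{m,n,t}` then have
mean zero and only the diagonal of `E[W²]` survives, giving `(∑ₗ vₗ²) · E[∑ₜ yₜ²]`.
Finally `∑ₗ vₗ² = 2⁻ᵐ`: the recursion writes `v_{m+1,n}` as `u_n` convolved with `v_{m,⌊n/2⌋}`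
upsampled by `2^m`, which turns the autocorrelation of `v_{m+1,n}` at lags in `2^{m+1}ℤ` into
`2⁻ᵐ` times that of `u_n` at lags in `2ℤ`.
-/

open Function Set

lemma support_subset_Icc_of_eq_zero {M : Type*} [Zero M] {f : ℤ → M} {L : ℤ}
    (hf : ∀ l, (l < 0 ∨ L ≤ l) → f l = 0) : support f ⊆ Icc 0 (L - 1) := by
  intro l hl
  by_contra hl'
  rw [mem_Icc] at hl'
  exact hl (hf l (by omega))

lemma finsum_finsum_eq_sum_sum {α β M : Type*} [AddCommMonoid M] {F : α → β → M}
    {s : Finset α} {t : Finset β} (hF : ∀ i j, F i j ≠ 0 → i ∈ s ∧ j ∈ t) :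
    ∑ᶠ i, ∑ᶠ j, F i j = ∑ i ∈ s, ∑ j ∈ t, F i j := by
  rw [finsum_congr fun i => finsum_eq_sum_of_support_subset (F i) fun j hj => (hF i j hj).2]
  refine finsum_eq_sum_of_support_subset _ fun i hi => ?_
  obtain ⟨j, -, hj⟩ := Finset.exists_ne_zero_of_sum_ne_zero hi
  exact (hF i j hj).1

lemma injOn_intCast_Icc {T : ℕ} {N : ℤ} (hN : N < T) :
    InjOn (Int.cast : ℤ → ZMod T) (Icc 0 N) := by
  intro a ha b hb hab
  have := (ZMod.intCast_eq_intCast_iff' a b T).mp hab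
  rwa [Int.emod_eq_of_lt ha.1 (by linarith [ha.2]), Int.emod_eq_of_lt hb.1 (by linarith [hb.2])]
    at this

section Autocorrelation

variable {R : Type*} [CommRing R]

noncomputable def autocorr (v : ℤ → R) (d : ℤ) : R := ∑ᶠ l, v l * v (l + d)

noncomputable def upsampledConv (u v : ℤ → R) (c l : ℤ) : R := ∑ᶠ k, u k * v (l - c * k)

lemma support_upsampledConv_subset {u v : ℤ → R} {a b c : ℤ} (hu : support u ⊆ Icc 0 a)
    (hv : support v ⊆ Icc 0 b) (hc : 0 ≤ c) :
    support (upsampledConv u v c) ⊆ Icc 0 (c * a + b) := by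
  intro l hl
  obtain ⟨k, hk⟩ : ∃ k, u k * v (l - c * k) ≠ 0 := by
    by_contra! H
    exact hl (finsum_eq_zero_of_forall_eq_zero H)
  obtain ⟨hk₀, hka⟩ := hu (left_ne_zero_of_mul hk)
  obtain ⟨hl₀, hlb⟩ := hv (right_ne_zero_of_mul hk)
  constructor <;> nlinarith

lemma upsampledConv_eq_sum {u : ℤ → R} {s : Finset ℤ} (hu : support u ⊆ s) (v : ℤ → R)
    (c l : ℤ) : upsampledConv u v c l = ∑ k ∈ s, u k * v (l - c * k) :=
  finsum_eq_sum_of_support_subset _ ((support_mul_subset_left _ _).trans hu)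

lemma autocorr_eq_sum {v : ℤ → R} {s : Finset ℤ} (hv : support v ⊆ s) (d : ℤ) :
    autocorr v d = ∑ l ∈ s, v l * v (l + d) :=
  finsum_eq_sum_of_support_subset _ ((support_mul_subset_left _ _).trans hv)

lemma hasFiniteSupport_mul_shift_mul {v : ℤ → R} (hv : (support v).Finite) (x : R) (a : ℤ)
    (w : ℤ → R) : HasFiniteSupport fun l => x * v (l - a) * w l :=
  (hv.preimage sub_left_injective.injOn).subset fun _ hl =>
    right_ne_zero_of_mul (left_ne_zero_of_mul hl)

lemma autocorr_upsampledConv {u v : ℤ → R} {s : Finset ℤ} (hu : support u ⊆ s)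
    (hv : (support v).Finite) (c d : ℤ) :
    autocorr (upsampledConv u v c) d =
      ∑ k ∈ s, ∑ k' ∈ s, u k * u k' * autocorr v (d + c * (k - k')) := by
  have hshift : ∀ k k', ∑ᶠ l, u k * v (l - c * k) * (u k' * v (l + d - c * k')) =
      u k * u k' * autocorr v (d + c * (k - k')) := by
    intro k k'
    rw [autocorr, mul_finsum' _ _ (hv.subset (support_mul_subset_left _ _)),
      ← finsum_comp_equiv (Equiv.addRight (c * k))]
    refine finsum_congr fun l => ?_
    rw [Equiv.coe_addRight, add_sub_cancel_right,
      show l + c * k + d - c * k' = l + (d + c * (k - k')) by ring]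
    ring
  rw [autocorr]
  simp only [upsampledConv_eq_sum hu, Finset.sum_mul]
  rw [finsum_sum_comm _ _ fun k _ => hasFiniteSupport_mul_shift_mul hv _ _ _]
  refine Finset.sum_congr rfl fun k _ => ?_
  simp only [Finset.mul_sum]
  rw [finsum_sum_comm _ _ fun k' _ => hasFiniteSupport_mul_shift_mul hv _ _ _]
  exact Finset.sum_congr rfl fun k' _ => hshift k k'

lemma autocorr_upsampledConv_of_orthogonal {u v : ℤ → R} {s : Finset ℤ} (hu : support u ⊆ s)
    (hv : (support v).Finite) {c : ℤ} {α β : R}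
    (hvorth : ∀ i, autocorr v (c * i) = α * if i = 0 then 1 else 0)
    (huorth : ∀ j, autocorr u (2 * j) = β * if j = 0 then 1 else 0) (j : ℤ) :
    autocorr (upsampledConv u v c) (c * (2 * j)) = α * β * if j = 0 then 1 else 0 := by
  calc autocorr (upsampledConv u v c) (c * (2 * j))
      = ∑ k ∈ s, ∑ k' ∈ s, if k' = k + 2 * j then α * (u k * u k') else 0 := by
        rw [autocorr_upsampledConv hu hv]
        refine Finset.sum_congr rfl fun k _ => Finset.sum_congr rfl fun k' _ => ?_
        rw [show c * (2 * j) + c * (k - k') = c * (2 * j + k - k') by ring, hvorth]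
        split_ifs <;> first | omega | ring
    _ = α * ∑ k ∈ s, u k * u (k + 2 * j) := by
        rw [Finset.mul_sum]
        refine Finset.sum_congr rfl fun k _ => ?_
        rw [Finset.sum_ite_eq']
        split_ifs with hks
        · rfl
        · rw [notMem_support.mp fun hk => hks (hu hk), mul_zero, mul_zero]
    _ = α * β * if j = 0 then 1 else 0 := by
        rw [← autocorr_eq_sum hu, huorth, mul_assoc]

end Autocorrelation

section WaveletPacket

variable {g h : ℤ → ℝ}

lemma uF_eq_or (n : ℕ) : uF g h n = g ∨ uF g h n = h := by
  by_cases hn : n % 4 = 0 ∨ n % 4 = 3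
  · exact Or.inl (funext fun l => if_pos hn)
  · exact Or.inr (funext fun l => if_neg hn)

lemma wp_one_eq_or (n : ℕ) : wp g h 1 n = g ∨ wp g h 1 n = h := by
  by_cases hn : n = 0
  · exact Or.inl (funext fun l => if_pos hn)
  · exact Or.inr (funext fun l => if_neg hn)

lemma wp_add_two (m n : ℕ) :
    wp g h (m + 2) n = upsampledConv (uF g h n) (wp g h (m + 1) (n / 2)) (2 ^ (m + 1)) := by
  funext l
  rw [wp]
  rfl

variable {a : ℤ} (hg : support g ⊆ Icc 0 a) (hh : support h ⊆ Icc 0 a)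
include hg hh

lemma support_uF_subset (n : ℕ) : support (uF g h n) ⊆ Icc 0 a := by
  rcases uF_eq_or (g := g) (h := h) n with e | e <;> rw [e]
  exacts [hg, hh]

lemma support_wp_subset (m n : ℕ) :
    support (wp g h (m + 1) n) ⊆ Icc 0 ((2 ^ (m + 1) - 1) * a) := by
  induction m generalizing n with
  | zero =>
    rcases wp_one_eq_or (g := g) (h := h) n with e | e <;> rw [e] <;> norm_num
    exacts [hg, hh]
  | succ m ih =>
    rw [wp_add_two]
    convert support_upsampledConv_subset (support_uF_subset hg hh n) (ih (n / 2))
      (pow_nonneg zero_le_two _) using 2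
    ring

lemma autocorr_wp
    (horth_g : ∀ k, autocorr g (2 * k) = 1 / 2 * if k = 0 then 1 else 0)
    (horth_h : ∀ k, autocorr h (2 * k) = 1 / 2 * if k = 0 then 1 else 0) (m n : ℕ) (j : ℤ) :
    autocorr (wp g h (m + 1) n) (2 ^ (m + 1) * j) =
      1 / 2 ^ (m + 1) * if j = 0 then 1 else 0 := by
  induction m generalizing n j with
  | zero =>
    rcases wp_one_eq_or (g := g) (h := h) n with e | e <;> rw [e] <;>
      simp only [zero_add, pow_one]
    exacts [horth_g j, horth_h j]
  | succ m ih =>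
    have horth_u : ∀ k, autocorr (uF g h n) (2 * k) = 1 / 2 * if k = 0 then 1 else 0 := by
      rcases uF_eq_or (g := g) (h := h) n with e | e <;> rw [e]
      exacts [horth_g, horth_h]
    rw [wp_add_two, show (2 : ℤ) ^ (m + 1 + 1) * j = 2 ^ (m + 1) * (2 * j) by ring,
      autocorr_upsampledConv_of_orthogonal (s := Finset.Icc 0 a)
        (by simpa using support_uF_subset hg hh n)
        ((finite_Icc _ _).subset (support_wp_subset hg hh m _)) (ih (n / 2)) horth_u]
    ring

end WaveletPacket

section CircularFilter

variable {Ω : Type*} [MeasureSpace Ω] {T : ℕ} {y : ZMod T → Ω → ℝ}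
  (hL2 : ∀ t, MemLp (y t) 2) (huncorr : ∀ s t, s ≠ t → ∫ ω, y s ω * y t ω = 0)
  {S : Finset ℤ} (hS : InjOn (Int.cast : ℤ → ZMod T) S) {v : ℤ → ℝ} (hv : support v ⊆ S)

include hL2 in
lemma integrable_const_mul_mul (c : ℝ) (s t : ZMod T) :
    Integrable fun ω => c * (y s ω * y t ω) :=
  ((hL2 s).integrable_mul (hL2 t)).const_mul c

include huncorr hS in
lemma integral_shift_mul_shift_of_ne {i j : ℤ} (hi : i ∈ S) (hj : j ∈ S) (hij : i ≠ j)
    (t : ZMod T) : ∫ ω, y (t - i) ω * y (t - j) ω = 0 :=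
  huncorr _ _ fun e => hij (hS hi hj (sub_right_injective e))

include hL2 huncorr hS hv in
lemma integral_circularFilter_crossTerm_eq_zero (t : ZMod T) :
    ∫ ω, (∑ᶠ i : ℤ, ∑ᶠ j : ℤ,
      if 0 ≤ i ∧ i < j then v i * v j * y (t - i) ω * y (t - j) ω else 0) = 0 := by
  have hmem : ∀ i, v i ≠ 0 → i ∈ S := fun i hi => Finset.mem_coe.mp (hv hi)
  have hsum : ∀ ω, (∑ᶠ i : ℤ, ∑ᶠ j : ℤ,
      if 0 ≤ i ∧ i < j then v i * v j * y (t - i) ω * y (t - j) ω else 0) =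
      ∑ i ∈ S, ∑ j ∈ S, if 0 ≤ i ∧ i < j then v i * v j * (y (t - i) ω * y (t - j) ω) else 0 := by
    intro ω
    simp only [← mul_assoc]
    refine finsum_finsum_eq_sum_sum fun i j hij => ?_
    split_ifs at hij
    · exact ⟨hmem i (left_ne_zero_of_mul (left_ne_zero_of_mul (left_ne_zero_of_mul hij))),
        hmem j (right_ne_zero_of_mul (left_ne_zero_of_mul (left_ne_zero_of_mul hij)))⟩
    · exact absurd rfl hij
  have hint : ∀ i j, Integrable fun ω =>
      if 0 ≤ i ∧ i < j then v i * v j * (y (t - i) ω * y (t - j) ω) else 0 := by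
    intro i j
    split_ifs
    exacts [integrable_const_mul_mul hL2 _ _ _, integrable_zero _ _ _]
  simp only [hsum]
  rw [integral_finsetSum _ fun i _ => integrable_finsetSum _ fun j _ => hint i j]
  refine Finset.sum_eq_zero fun i hi => ?_
  rw [integral_finsetSum _ fun j _ => hint i j]
  refine Finset.sum_eq_zero fun j hj => ?_
  split_ifs with hij
  · rw [integral_const_mul, integral_shift_mul_shift_of_ne huncorr hS hi hj (by omega), mul_zero]
  · exact integral_zero _ _

include hL2 huncorr hS hv in
lemma integral_sum_sq_circularFilter [NeZero T] :
    ∫ ω, ∑ t, (∑ᶠ l : ℤ, v l * y (t - l) ω) ^ 2 = autocorr v 0 * ∫ ω, ∑ t, y t ω ^ 2 := by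
  have hW : ∀ t ω, ∑ᶠ l, v l * y (t - l) ω = ∑ l ∈ S, v l * y (t - l) ω := fun t ω =>
    finsum_eq_sum_of_support_subset _ ((support_mul_subset_left _ _).trans hv)
  have hsq : ∀ t ω, (∑ l ∈ S, v l * y (t - l) ω) ^ 2 =
      ∑ l ∈ S, ∑ l' ∈ S, v l * v l' * (y (t - l) ω * y (t - l') ω) := by
    intro t ω
    rw [sq, Finset.sum_mul_sum]
    exact Finset.sum_congr rfl fun _ _ => Finset.sum_congr rfl fun _ _ => by ring
  have hdiag : ∀ t, ∀ l ∈ S, ∑ l' ∈ S, v l * v l' * ∫ ω, y (t - l) ω * y (t - l') ω =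
      v l ^ 2 * ∫ ω, y (t - l) ω ^ 2 := by
    intro t l hl
    rw [Finset.sum_eq_single_of_mem l hl fun l' hl' hne =>
      by rw [integral_shift_mul_shift_of_ne huncorr hS hl hl' hne.symm, mul_zero]]
    simp only [sq]
  have hint := integrable_const_mul_mul hL2
  calc ∫ ω, ∑ t, (∑ᶠ l, v l * y (t - l) ω) ^ 2
      = ∑ t, ∑ l ∈ S, ∑ l' ∈ S, v l * v l' * ∫ ω, y (t - l) ω * y (t - l') ω := by
        simp only [hW, hsq]
        rw [integral_finsetSum _ fun t _ => integrable_finsetSum _ fun l _ =>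
          integrable_finsetSum _ fun l' _ => hint _ _ _]
        refine Finset.sum_congr rfl fun t _ => ?_
        rw [integral_finsetSum _ fun l _ => integrable_finsetSum _ fun l' _ => hint _ _ _]
        refine Finset.sum_congr rfl fun l _ => ?_
        rw [integral_finsetSum _ fun l' _ => hint _ _ _]
        exact Finset.sum_congr rfl fun l' _ => integral_const_mul _ _
    _ = ∑ t, ∑ l ∈ S, v l ^ 2 * ∫ ω, y (t - l) ω ^ 2 :=
        Finset.sum_congr rfl fun t _ => Finset.sum_congr rfl (hdiag t)
    _ = ∑ l ∈ S, v l ^ 2 * ∑ t, ∫ ω, y t ω ^ 2 := by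
        rw [Finset.sum_comm]
        refine Finset.sum_congr rfl fun l _ => ?_
        rw [Finset.mul_sum]
        exact Fintype.sum_equiv (Equiv.subRight (l : ZMod T)) _ _ fun t => rfl
    _ = autocorr v 0 * ∫ ω, ∑ t, y t ω ^ 2 := by
        rw [← Finset.sum_mul, autocorr_eq_sum hv,
          integral_finsetSum _ fun t _ => (hL2 t).integrable_sq]
        simp only [add_zero, sq]

end CircularFilter

theorem stmt10_general (Ω : Type) [MeasureSpace Ω]
    (L : ℕ)
    (h g : ℤ → ℝ)
    (hsupp : ∀ l : ℤ, (l < 0 ∨ (L : ℤ) ≤ l) → h l = 0)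
    (gsupp : ∀ l : ℤ, (l < 0 ∨ (L : ℤ) ≤ l) → g l = 0)
    (horth_h : ∀ k : ℤ,
      ∑ᶠ l : ℤ, h l * h (l + 2 * k) = (1 / 2) * (if k = 0 then 1 else 0))
    (horth_g : ∀ k : ℤ,
      ∑ᶠ l : ℤ, g l * g (l + 2 * k) = (1 / 2) * (if k = 0 then 1 else 0))
    (m : ℕ) (hm : 1 ≤ m)
    (T : ℕ) [NeZero T] (hT : (2 ^ m - 1) * (L - 1) + 1 ≤ T)
    (y : ZMod T → Ω → ℝ)
    (hL2 : ∀ t : ZMod T, MemLp (y t) 2)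
    (huncorr : ∀ s t : ZMod T, s ≠ t → ∫ ω, y s ω * y t ω = 0)
    (n : ℕ) :
    (∀ t : ZMod T,
      ∫ ω, (∑ᶠ i : ℤ, ∑ᶠ j : ℤ,
        if 0 ≤ i ∧ i < j then
          wp g h m n i * wp g h m n j * y (t - (i : ZMod T)) ω * y (t - (j : ZMod T)) ω
        else 0) = 0)
    ∧ ∫ ω, ∑ t : ZMod T, (∑ᶠ l : ℤ, wp g h m n l * y (t - (l : ZMod T)) ω) ^ 2
        = (1 / 2 ^ m) * ∫ ω, ∑ t : ZMod T, (y t ω) ^ 2 := by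
  obtain ⟨m, rfl⟩ : ∃ k, m = k + 1 := ⟨m - 1, by omega⟩
  set N : ℤ := (2 ^ (m + 1) - 1) * ((L : ℤ) - 1)
  have hg := support_subset_Icc_of_eq_zero gsupp
  have hh := support_subset_Icc_of_eq_zero hsupp
  have hv : support (wp g h (m + 1) n) ⊆ Finset.Icc 0 N := by
    simpa using support_wp_subset hg hh m n
  have hNT : N < T := by
    have h2m := Nat.one_le_two_pow (n := m + 1)
    zify [h2m] at hT
    -- `L - 1` in `hT` is truncated subtraction in `ℕ`
    have hL : (L : ℤ) - 1 ≤ ((L - 1 : ℕ) : ℤ) := by omega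
    nlinarith
  have hS : InjOn (Int.cast : ℤ → ZMod T) (Finset.Icc 0 N) := by
    simpa using injOn_intCast_Icc hNT
  refine ⟨integral_circularFilter_crossTerm_eq_zero hL2 huncorr hS hv, ?_⟩
  rw [integral_sum_sq_circularFilter hL2 huncorr hS hv,
    ← mul_zero (2 ^ (m + 1) : ℤ), autocorr_wp hg hh horth_g horth_h, if_pos rfl, mul_one]

/-- For (possibly heteroskedastic) mean-zero uncorrelated square-integrable
random variables `y_0, …, y_{T-1}` with `T ≥ L_m`, the circularly filtered MODWPT
coefficients satisfy `E z_{m,n,t} = 0` for all `t`, and consequently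
`E[∑_t W_{m,n,t}²] = (1/2^m) E[∑_t y_t²]`. -/
theorem stmt10 (Ω : Type) [MeasureSpace Ω] [IsProbabilityMeasure (ℙ : Measure Ω)]
    (L : ℕ) (hLpos : 0 < L)
    (h g : ℤ → ℝ)
    (hsupp : ∀ l : ℤ, (l < 0 ∨ (L : ℤ) ≤ l) → h l = 0)
    (gsupp : ∀ l : ℤ, (l < 0 ∨ (L : ℤ) ≤ l) → g l = 0)
    (horth_h : ∀ k : ℤ,
      ∑ᶠ l : ℤ, h l * h (l + 2 * k) = (1 / 2) * (if k = 0 then 1 else 0))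
    (horth_g : ∀ k : ℤ,
      ∑ᶠ l : ℤ, g l * g (l + 2 * k) = (1 / 2) * (if k = 0 then 1 else 0))
    (m : ℕ) (hm : 1 ≤ m)
    (T : ℕ) [NeZero T] (hT : (2 ^ m - 1) * (L - 1) + 1 ≤ T)
    (y : ZMod T → Ω → ℝ)
    (hL2 : ∀ t : ZMod T, MemLp (y t) 2)
    (hmean : ∀ t : ZMod T, ∫ ω, y t ω = 0)
    (huncorr : ∀ s t : ZMod T, s ≠ t → ∫ ω, y s ω * y t ω = 0)
    (n : ℕ) (hn : n ≤ 2 ^ m - 1) :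
    (∀ t : ZMod T,
      ∫ ω, (∑ᶠ i : ℤ, ∑ᶠ j : ℤ,
        if 0 ≤ i ∧ i < j then
          wp g h m n i * wp g h m n j * y (t - (i : ZMod T)) ω * y (t - (j : ZMod T)) ω
        else 0) = 0)
    ∧ ∫ ω, ∑ t : ZMod T, (∑ᶠ l : ℤ, wp g h m n l * y (t - (l : ZMod T)) ω) ^ 2
        = (1 / 2 ^ m) * ∫ ω, ∑ t : ZMod T, (y t ω) ^ 2 :=
  stmt10_general Ω L h g hsupp gsupp horth_h horth_g m hm T hT y hL2 huncorr n
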